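/- For every x=(x₂,x₃)∈ℝ² with x₂² ≠ x₃² and x₃ ≠ 0, the function B' satisfies (HB')(x) = 2i·B'(x), where H is the operator (Hg)(x) = (−i/(4π))·(∂²g/∂x₂² − ∂²g/∂x₃²)(x) + πi·(x₂²−x₃²)·g(x). (From the proof of paper Proposition 5.12.) -/

import Mathlib

/-!
Away from the light cone `B'` is locally either `0` or, because
`min |u - v| |u + v| = |u| - |v|` for `|v| ≤ |u|` and the signs of `x₂, x₃` are locally
constant, a function `(a y₂ + b y₃) e^{-π q(y)}`. Since `H` is a local operator, it suffices
that every such function is an eigenfunction of `H` with eigenvalue `2i` on all of `ℝ²`,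
which is a direct computation.
-/

/-- The `e₃`-component `B'` of the singular function `ψ̃'₀,₁`. -/
noncomputable def B' (x : ℝ × ℝ) : ℝ :=
  if x.1 ^ 2 - x.2 ^ 2 > 0 then
    (1/2) * min |x.1 - x.2| |x.1 + x.2| * Real.exp (-(Real.pi * (x.1 ^ 2 - x.2 ^ 2)))
  else 0

/-- The infinitesimal generator `H` of `SO(2)` in the Weil representation attached to the
signature `(1,1)` plane, acting on a real-valued function `g` on `ℝ²`:
`(Hg)(x) = (-i/(4π))·(∂²g/∂x₂² - ∂²g/∂x₃²)(x) + πi·(x₂²-x₃²)·g(x)`. -/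
noncomputable def Hop (g : ℝ × ℝ → ℝ) (x : ℝ × ℝ) : ℂ :=
  (-Complex.I / (4 * (Real.pi : ℂ))) *
    ((deriv (deriv (fun t : ℝ => g (t, x.2))) x.1
      - deriv (deriv (fun t : ℝ => g (x.1, t))) x.2 : ℝ) : ℂ)
  + (Real.pi : ℂ) * Complex.I * ((x.1 ^ 2 - x.2 ^ 2 : ℝ) : ℂ) * ((g x : ℝ) : ℂ)

open Filter Topology Real

lemma min_abs_sub_abs_add_of_abs_le {u v : ℝ} (h : |v| ≤ |u|) :
    min |u - v| |u + v| = |u| - |v| := by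
  simp only [abs_eq_max_neg, min_def, max_def] at *
  split_ifs at * <;> linarith

lemma abs_eventually_eq_sign_mul {a : ℝ} (ha : a ≠ 0) :
    ∀ᶠ t in 𝓝 a, |t| = (SignType.sign a : ℝ) * t := by
  rcases ha.lt_or_gt with ha | ha
  · filter_upwards [gt_mem_nhds ha] with t ht
    simp [sign_neg ha, abs_of_neg ht]
  · filter_upwards [lt_mem_nhds ha] with t ht
    simp [sign_pos ha, abs_of_pos ht]

lemma hasDerivAt_mul_exp_quadratic {p : ℝ → ℝ} {p' σ k t : ℝ} (hp : HasDerivAt p p' t) :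
    HasDerivAt (fun s => p s * exp (σ * s ^ 2 + k))
      ((p' + 2 * σ * t * p t) * exp (σ * t ^ 2 + k)) t := by
  have hq : HasDerivAt (fun s => σ * s ^ 2 + k) (2 * σ * t) t :=
    (((hasDerivAt_pow 2 t).const_mul σ).add_const k).congr_deriv (by norm_num; ring)
  exact (hp.mul hq.exp).congr_deriv (by ring)

lemma deriv_deriv_affine_mul_exp_quadratic (a c σ k t : ℝ) :
    deriv (deriv fun s => (a * s + c) * exp (σ * s ^ 2 + k)) t
      = (2 * σ * (a * t + c) + 4 * σ * a * t + 4 * σ ^ 2 * t ^ 2 * (a * t + c))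
          * exp (σ * t ^ 2 + k) := by
  have haff (s : ℝ) : HasDerivAt (fun s => a * s + c) a s :=
    (((hasDerivAt_id s).const_mul a).add_const c).congr_deriv (mul_one a)
  have hderiv : deriv (fun s => (a * s + c) * exp (σ * s ^ 2 + k))
      = fun s => (a + 2 * σ * s * (a * s + c)) * exp (σ * s ^ 2 + k) :=
    funext fun s => (hasDerivAt_mul_exp_quadratic (haff s)).deriv
  have hp : HasDerivAt (fun s => a + 2 * σ * s * (a * s + c))
      (2 * σ * (a * t + c) + 2 * σ * t * a) t :=
    ((((hasDerivAt_id t).const_mul (2 * σ)).mul (haff t)).const_add a).congr_deriv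
      (by simp)
  rw [hderiv, (hasDerivAt_mul_exp_quadratic hp).deriv]
  ring

lemma Hop_congr {g h : ℝ × ℝ → ℝ} {x : ℝ × ℝ} (hgh : g =ᶠ[𝓝 x] h) :
    Hop g x = Hop h x := by
  have h₁ : (fun t => g (t, x.2)) =ᶠ[𝓝 x.1] fun t => h (t, x.2) :=
    hgh.comp_tendsto ((continuous_id.prodMk continuous_const).tendsto' _ _ rfl)
  have h₂ : (fun t => g (x.1, t)) =ᶠ[𝓝 x.2] fun t => h (x.1, t) :=
    hgh.comp_tendsto ((continuous_const.prodMk continuous_id).tendsto' _ _ rfl)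
  rw [Hop, Hop, h₁.deriv.deriv_eq, h₂.deriv.deriv_eq, hgh.eq_of_nhds]

lemma Hop_zero (x : ℝ × ℝ) : Hop 0 x = 0 := by
  simp [Hop]

lemma Hop_affine_mul_exp (a b : ℝ) (x : ℝ × ℝ) :
    Hop (fun y => (a * y.1 + b * y.2) * exp (-(π * (y.1 ^ 2 - y.2 ^ 2)))) x
      = 2 * Complex.I *
          (((a * x.1 + b * x.2) * exp (-(π * (x.1 ^ 2 - x.2 ^ 2))) : ℝ) : ℂ) := by
  have h₁ : (fun t => (a * t + b * x.2) * exp (-(π * (t ^ 2 - x.2 ^ 2))))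
      = fun t => (a * t + b * x.2) * exp (-π * t ^ 2 + π * x.2 ^ 2) := by
    ext t; ring_nf
  have h₂ : (fun t => (a * x.1 + b * t) * exp (-(π * (x.1 ^ 2 - t ^ 2))))
      = fun t => (b * t + a * x.1) * exp (π * t ^ 2 + -π * x.1 ^ 2) := by
    ext t; ring_nf
  have hπ : (π : ℂ) ≠ 0 := Complex.ofReal_ne_zero.mpr pi_ne_zero
  simp only [Hop]
  rw [h₁, h₂, deriv_deriv_affine_mul_exp_quadratic, deriv_deriv_affine_mul_exp_quadratic]
  push_cast
  field_simp
  ring_nf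

lemma B'_eventuallyEq_zero_of_sq_lt_sq {x : ℝ × ℝ} (hx : x.1 ^ 2 < x.2 ^ 2) :
    B' =ᶠ[𝓝 x] 0 := by
  have hopen : IsOpen {y : ℝ × ℝ | y.1 ^ 2 < y.2 ^ 2} := isOpen_lt (by fun_prop) (by fun_prop)
  filter_upwards [hopen.mem_nhds hx] with y hy
  simp only [B', Pi.zero_apply]
  rw [if_neg (not_lt.mpr (sub_nonpos.mpr hy.le))]

lemma B'_eventuallyEq_affine_mul_exp {x : ℝ × ℝ} (hx : x.2 ^ 2 < x.1 ^ 2) (hx₂ : x.2 ≠ 0) :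
    B' =ᶠ[𝓝 x] fun y =>
      ((SignType.sign x.1 : ℝ) / 2 * y.1 + -(SignType.sign x.2 : ℝ) / 2 * y.2)
        * exp (-(π * (y.1 ^ 2 - y.2 ^ 2))) := by
  have hx₁ : x.1 ≠ 0 := by
    rintro h; rw [h] at hx; nlinarith [sq_nonneg x.2]
  have hopen : IsOpen {y : ℝ × ℝ | y.2 ^ 2 < y.1 ^ 2} := isOpen_lt (by fun_prop) (by fun_prop)
  filter_upwards [hopen.mem_nhds hx,
    continuous_fst.continuousAt.eventually (abs_eventually_eq_sign_mul hx₁),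
    continuous_snd.continuousAt.eventually (abs_eventually_eq_sign_mul hx₂)] with y hy h₁ h₂
  have hy' : |y.2| ≤ |y.1| := sq_le_sq.mp hy.le
  rw [B', if_pos (sub_pos.mpr hy), min_abs_sub_abs_add_of_abs_le hy', h₁, h₂]
  ring

/-- From the proof of paper Proposition 5.12: outside the light-cone and the set
`x₃ = 0`, the function `B'` satisfies `(HB')(x) = 2i·B'(x)`. -/
theorem stmt12 (x : ℝ × ℝ) (hx : x.1 ^ 2 ≠ x.2 ^ 2) (hx3 : x.2 ≠ 0) :
    Hop B' x = 2 * Complex.I * ((B' x : ℝ) : ℂ) := by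
  rcases hx.lt_or_gt with h | h
  · have hB := B'_eventuallyEq_zero_of_sq_lt_sq h
    rw [Hop_congr hB, hB.eq_of_nhds, Hop_zero]
    simp
  · have hB := B'_eventuallyEq_affine_mul_exp h hx3
    rw [Hop_congr hB, hB.eq_of_nhds, Hop_affine_mul_exp]
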